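/- Let μ > 0, P > 0, and let g : ℝ → E be a continuous P-periodic function into a Banach space E. Then the function U(τ) = (μ/(e^{μP} − 1)) ∫_τ^{τ+P} e^{μ(θ−τ)} g(θ) dθ is P-periodic, continuously differentiable, and satisfies U(τ) + (1/μ)U'(τ) = g(τ) for all τ. -/

import Mathlib

/-!
Writing `e^{μ(θ-τ)} = e^{-μτ} e^{μθ}`, the integral `V(τ) = ∫_τ^{τ+P} e^{μ(θ-τ)} g(θ) dθ` is
`e^{-μτ}` times a difference of primitives of `e^{μθ} g(θ)`, so by the fundamental theorem of
calculus `V' = e^{μP} g(τ+P) - g(τ) - μ V`. Periodicity of `g` turns this into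
`V' = (e^{μP} - 1) g - μ V`, and the normalisation `μ / (e^{μP} - 1)` gives `U' = μ (g - U)`.
Periodicity of `U` is the substitution `θ ↦ θ + P`.
-/

open Real

theorem Function.Periodic.periodic_integral_window_smul {E : Type*} [NormedAddCommGroup E]
    [NormedSpace ℝ E] {g : ℝ → E} {P : ℝ} (hg : Function.Periodic g P) (k : ℝ → ℝ) (T : ℝ) :
    Function.Periodic (fun τ => ∫ θ in τ..τ + T, k (θ - τ) • g θ) P := by
  intro τ
  dsimp only
  rw [add_right_comm, ← intervalIntegral.integral_comp_add_right]
  simp only [add_sub_add_right_eq_sub, hg _]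

theorem integral_exp_mul_sub_smul {E : Type*} [NormedAddCommGroup E] [NormedSpace ℝ E]
    (μ τ a b : ℝ) (g : ℝ → E) :
    ∫ θ in a..b, exp (μ * (θ - τ)) • g θ = exp (-(μ * τ)) • ∫ θ in a..b, exp (μ * θ) • g θ := by
  rw [← intervalIntegral.integral_smul]
  congr 1 with θ
  rw [smul_smul, ← exp_add]
  ring_nf

section Differentiation

variable {E : Type*} [NormedAddCommGroup E] [NormedSpace ℝ E] [CompleteSpace E]

theorem Continuous.hasDerivAt_integral_window {f : ℝ → E} (hf : Continuous f) (T τ : ℝ) :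
    HasDerivAt (fun t => ∫ θ in t..t + T, f θ) (f (τ + T) - f τ) τ := by
  have hprim : ∀ x, HasDerivAt (fun u => ∫ θ in (0 : ℝ)..u, f θ) (f x) x := fun x =>
    (hf.integral_hasStrictDerivAt 0 x).hasDerivAt
  have hwindow : (fun t => ∫ θ in t..t + T, f θ) =
      fun t => (∫ θ in (0 : ℝ)..t + T, f θ) - ∫ θ in (0 : ℝ)..t, f θ := by
    funext t
    rw [intervalIntegral.integral_interval_sub_left (hf.intervalIntegrable _ _)
      (hf.intervalIntegrable _ _)]
  rw [hwindow]
  exact ((hprim (τ + T)).comp_add_const τ T).sub (hprim τ)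

theorem Continuous.hasDerivAt_integral_window_exp_smul {g : ℝ → E} (hg : Continuous g)
    (μ P τ : ℝ) :
    HasDerivAt (fun t => ∫ θ in t..t + P, exp (μ * (θ - t)) • g θ)
      (exp (μ * P) • g (τ + P) - g τ - μ • ∫ θ in τ..τ + P, exp (μ * (θ - τ)) • g θ) τ := by
  simp only [integral_exp_mul_sub_smul]
  have hweight : HasDerivAt (fun t => exp (-(μ * t))) (-μ * exp (-(μ * τ))) τ := by
    simpa [mul_comm] using ((hasDerivAt_id τ).const_mul μ).neg.exp
  have hf : Continuous fun θ => exp (μ * θ) • g θ := by fun_prop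
  convert hweight.fun_smul (hf.hasDerivAt_integral_window P τ) using 1
  have hshift : exp (-(μ * τ)) * exp (μ * (τ + P)) = exp (μ * P) := by
    rw [← exp_add]; ring_nf
  have hcancel : exp (-(μ * τ)) * exp (μ * τ) = 1 := by
    rw [← exp_add, neg_add_cancel, exp_zero]
  simp only [smul_sub, smul_smul, hshift, hcancel, one_smul]
  module

end Differentiation

/-- Explicit inversion formula for `Q_μ = I + (1/μ)∂_τ` on periodic functions:
`U(τ) = (μ/(e^{μP}−1)) ∫_τ^{τ+P} e^{μ(θ−τ)} g(θ) dθ` is periodic, C¹, and solves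
`U + (1/μ)U' = g`. -/
theorem Qmu_inversion_formula
    {E : Type*} [NormedAddCommGroup E] [NormedSpace ℝ E] [CompleteSpace E]
    (μ P : ℝ) (hμ : 0 < μ) (hP : 0 < P)
    (g : ℝ → E) (hg : Continuous g) (hper : Function.Periodic g P)
    (U : ℝ → E)
    (hU : ∀ τ, U τ = (μ / (Real.exp (μ * P) - 1)) •
        ∫ θ in τ..(τ + P), Real.exp (μ * (θ - τ)) • g θ) :
    Function.Periodic U P ∧ ContDiff ℝ 1 U ∧
    ∀ τ, U τ + (1 / μ) • deriv U τ = g τ := by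
  set c := μ / (exp (μ * P) - 1)
  have hc : c * (exp (μ * P) - 1) = μ :=
    div_mul_cancel₀ _ (sub_pos.2 (one_lt_exp_iff.2 (by positivity))).ne'
  clear_value c
  have hUV : U = c • fun τ => ∫ θ in τ..τ + P, exp (μ * (θ - τ)) • g θ := funext hU
  have hode : ∀ τ, HasDerivAt U (μ • (g τ - U τ)) τ := fun τ => by
    rw [hUV]
    refine ((hg.hasDerivAt_integral_window_exp_smul μ P τ).const_smul c).congr_deriv ?_
    rw [Pi.smul_apply, hper τ]
    match_scalars
    · linear_combination hc
    · ring
  have hderiv : deriv U = fun τ => μ • (g τ - U τ) := funext fun τ => (hode τ).deriv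
  have hdiff : Differentiable ℝ U := fun τ => (hode τ).differentiableAt
  refine ⟨?_, ?_, fun τ => ?_⟩
  · rw [hUV]
    exact (hper.periodic_integral_window_smul (fun s => exp (μ * s)) P).smul c
  · rw [contDiff_one_iff_deriv, hderiv]
    exact ⟨hdiff, continuous_const.smul (hg.sub hdiff.continuous)⟩
  · rw [hderiv, smul_smul, one_div, inv_mul_cancel₀ hμ.ne', one_smul, add_sub_cancel]
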